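/- arXiv:2601.05219 — 2 statements merged into one kernel-verified Lean document; each statement's English description precedes it below -/
import Mathlib

section
/- Calibration score dominance: with D_n, the augmented set D_{n+1}^y = D_n ∪ {(X_{n+1},y)}, and one-shot scores s_j as above, for each i ∈ {1,...,n} the full-CAOS calibration score Σ_min^k of the multiset of scores of (X_i,Y_i) under references in D_{n+1}^y minus one occurrence of the self-score s_i(X_i,Y_i), is at most the leave-one-out CAOS calibration score Σ_min^k of the multiset of scores of (X_i,Y_i) under references in D_n \ {(X_i,Y_i)}. -/
/-- Sum of the `k` smallest elements of a multiset of reals. -/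
noncomputable def minSum (k : ℕ) (A : Multiset ℝ) : ℝ :=
  ((A.sort (· ≤ ·)).take k).sum

/-!
Inserting a score into a multiset can only lower the sum of its `k` smallest elements, as
long as there are at least `k` elements to begin with. Since `(X_i, Y_i)` belongs to `D_n`,
removing its self-score from the full-CAOS scores leaves exactly the leave-one-out scores
with the test point's score inserted.
-/

theorem Multiset.sort_cons_eq_orderedInsert {α : Type*} (r : α → α → Prop) [DecidableRel r]
    [IsTrans α r] [Std.Antisymm r] [Std.Total r] (a : α) (s : Multiset α) :
    (a ::ₘ s).sort r = (s.sort r).orderedInsert r a := by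
  induction s using Quot.inductionOn with
  | h l => simp [List.mergeSort_eq_insertionSort]

theorem Multiset.map_cons_sub_singleton_of_mem {α β : Type*} [DecidableEq α] [DecidableEq β]
    (f : α → β) {D : Multiset α} {e : α} (he : e ∈ D) (x : α) :
    (x ::ₘ D).map f - {f e} = f x ::ₘ (D.erase e).map f := by
  rw [Multiset.sub_singleton, Multiset.map_cons, ← Multiset.cons_erase he, Multiset.map_cons,
    Multiset.erase_cons_tail_of_mem (Multiset.mem_cons_self _ _), Multiset.erase_cons_head,
    Multiset.erase_cons_head]

theorem List.sum_take_orderedInsert_le {α : Type*} [AddCommMonoid α] [LinearOrder α]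
    [IsOrderedAddMonoid α] (a : α) {l : List α} (hl : l.Pairwise (· ≤ ·)) {k : ℕ}
    (hk : k ≤ l.length) :
    ((l.orderedInsert (· ≤ ·) a).take k).sum ≤ (l.take k).sum := by
  induction l generalizing a k with
  | nil => simp_all
  | cons b l ih =>
    obtain ⟨hb, hl⟩ := List.pairwise_cons.mp hl
    obtain _ | j := k
    · simp
    have hj : j ≤ l.length := by simpa using hk
    by_cases hab : a ≤ b
    · -- `a` takes the place of `b`, which reappears in the tail as if inserted into `l`.
      have hbl : l.orderedInsert (· ≤ ·) b = b :: l := by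
        cases l with
        | nil => rfl
        | cons c l => exact List.orderedInsert_cons_of_le _ l (hb c List.mem_cons_self)
      calc (((b :: l).orderedInsert (· ≤ ·) a).take (j + 1)).sum
          = a + ((l.orderedInsert (· ≤ ·) b).take j).sum := by simp [hab, hbl]
        _ ≤ b + (l.take j).sum := add_le_add hab (ih b hl hj)
        _ = ((b :: l).take (j + 1)).sum := by simp
    · simpa [hab] using add_le_add_right (ih a hl hj) b

theorem minSum_cons_le {k : ℕ} (a : ℝ) {B : Multiset ℝ} (hk : k ≤ Multiset.card B) :
    minSum k (a ::ₘ B) ≤ minSum k B := by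
  rw [minSum, minSum, Multiset.sort_cons_eq_orderedInsert]
  exact List.sum_take_orderedInsert_le a (Multiset.pairwise_sort B _) (by simpa using hk)

theorem full_caos_calibration_dominance_general {X Y : Type*} [DecidableEq (X × Y)]
    (k : ℕ) (s : X × Y → X → Y → ℝ)
    (Dn : Multiset (X × Y)) (e : X × Y) (he : e ∈ Dn)
    (hn : k ≤ Multiset.card (Dn.erase e))
    (xtest : X) (ytest : Y) :
    minSum k ((((xtest, ytest) ::ₘ Dn).map (fun e' => s e' e.1 e.2)) - {s e e.1 e.2}) ≤
      minSum k ((Dn.erase e).map (fun e' => s e' e.1 e.2)) := by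
  rw [Multiset.map_cons_sub_singleton_of_mem (fun e' => s e' e.1 e.2) he]
  exact minSum_cons_le _ (by simpa using hn)

/-- Calibration score dominance: the full CAOS calibration score of `(X_i, Y_i)`
(computed from references in `D_n ∪ {(X_{n+1}, y)}` with one occurrence of the
self-score removed) is at most the leave-one-out CAOS calibration score
(computed from references in `D_n \ {(X_i, Y_i)}`). -/
theorem full_caos_calibration_dominance {X Y : Type*} [DecidableEq (X × Y)]
    (k : ℕ) (hk : 1 ≤ k) (s : X × Y → X → Y → ℝ)
    (Dn : Multiset (X × Y)) (e : X × Y) (he : e ∈ Dn)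
    (hn : k ≤ Multiset.card (Dn.erase e))
    (xtest : X) (ytest : Y) :
    minSum k ((((xtest, ytest) ::ₘ Dn).map (fun e' => s e' e.1 e.2)) - {s e e.1 e.2}) ≤
      minSum k ((Dn.erase e).map (fun e' => s e' e.1 e.2)) :=
  full_caos_calibration_dominance_general k s Dn e he hn xtest ytest
end

section
/- Deterministic conformal inclusion lemma: for real numbers z_1,...,z_{n+1}, z_{n+1} ≤ Quantile({z_1,...,z_{n+1}}; 1−α) if and only if z_{n+1} ≤ Quantile({z_1,...,z_n}; (1−α)(1+1/n)), where Quantile(S; τ) denotes the min(⌈τ·|S|⌉,|S|)-th order statistic of S, provided ⌈(1−α)(n+1)⌉ ≤ n. -/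
/-- The `j`-th smallest element (1-indexed order statistic) of a multiset of reals. -/
noncomputable def orderStat (A : Multiset ℝ) (j : ℕ) : ℝ :=
  (A.sort (· ≤ ·)).getD (j - 1) 0

/-- Empirical quantile: the `min(⌈τ·|S|⌉, |S|)`-th order statistic of `S`. -/
noncomputable def quantile (S : Multiset ℝ) (τ : ℝ) : ℝ :=
  orderStat S (min ⌈τ * (Multiset.card S : ℝ)⌉₊ (Multiset.card S))

/-!
A value `a` lies below the `k`-th order statistic of a sample exactly when fewer than `k` sample
points lie strictly below `a`. Adding `a` itself to the sample does not change that count, so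
`a ≤ s_(k)` holds for the sample with `a` iff it holds for the sample without it, as long as `k`
is a valid index for the smaller sample. With `|S| = n`, the ranks `⌈(1-α)(n+1)⌉` and
`⌈(1-α)(1+1/n)·n⌉` coincide, and the hypothesis `⌈(1-α)(n+1)⌉ ≤ n` makes the truncation by `|S|`
inactive on both sides.
-/

theorem List.Pairwise.le_getElem_iff_countP_le {α : Type*} [LinearOrder α] {l : List α}
    (hl : l.Pairwise (· ≤ ·)) (a : α) {j : ℕ} (hj : j < l.length) :
    a ≤ l[j] ↔ l.countP (· < a) ≤ j := by
  induction l generalizing j with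
  | nil => simp at hj
  | cons b t ih =>
    obtain ⟨hb, ht⟩ := List.pairwise_cons.1 hl
    rw [List.countP_cons]
    by_cases hba : b < a
    · cases j with
      | zero => simp [hba]
      | succ j => simpa [hba] using ih ht (j := j) (by simpa using hj)
    · have hab : a ≤ b := not_lt.1 hba
      have hnone : t.countP (· < a) = 0 :=
        List.countP_eq_zero.2 fun x hx => by simpa using hab.trans (hb x hx)
      rw [if_neg (by simpa using hba), hnone]
      refine iff_of_true ?_ (Nat.zero_le _)
      cases j with
      | zero => exact hab
      | succ j => exact hab.trans (hb _ (List.getElem_mem _))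

theorem le_orderStat_iff (A : Multiset ℝ) (a : ℝ) {k : ℕ} (hk : k - 1 < Multiset.card A) :
    a ≤ orderStat A k ↔ A.countP (· < a) ≤ k - 1 := by
  have hlen : k - 1 < (A.sort (· ≤ ·)).length := by rwa [Multiset.length_sort]
  rw [orderStat, List.getD_eq_getElem _ _ hlen,
    (Multiset.pairwise_sort A _).le_getElem_iff_countP_le a hlen,
    ← Multiset.coe_countP, Multiset.sort_eq]

theorem le_orderStat_cons_self_iff (A : Multiset ℝ) (a : ℝ) {k : ℕ}
    (hk : k - 1 < Multiset.card A) :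
    a ≤ orderStat (a ::ₘ A) k ↔ a ≤ orderStat A k := by
  have hk' : k - 1 < Multiset.card (a ::ₘ A) := by rw [Multiset.card_cons]; omega
  rw [le_orderStat_iff _ _ hk, le_orderStat_iff _ _ hk', Multiset.countP_cons,
    if_neg (lt_irrefl a), add_zero]

theorem le_quantile_cons_self_iff (A : Multiset ℝ) (a τ : ℝ) (hA : 0 < Multiset.card A)
    (hcap : ⌈τ * (Multiset.card A + 1 : ℝ)⌉₊ ≤ Multiset.card A) :
    a ≤ quantile (a ::ₘ A) τ ↔ a ≤ quantile A (τ * (1 + 1 / Multiset.card A)) := by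
  have hrank : τ * (1 + 1 / (Multiset.card A : ℝ)) * Multiset.card A
      = τ * (Multiset.card A + 1 : ℝ) := by
    field_simp
  rw [quantile, quantile, hrank, Multiset.card_cons, Nat.cast_succ,
    min_eq_left (by omega), min_eq_left hcap]
  exact le_orderStat_cons_self_iff A a (by omega)

theorem conformal_inclusion_lemma_general (n : ℕ) (hn : 1 ≤ n) (z : Fin (n + 1) → ℝ)
    (α : ℝ) (hcap : ⌈(1 - α) * ((n : ℝ) + 1)⌉₊ ≤ n) :
    z (Fin.last n) ≤ quantile (↑(List.ofFn z) : Multiset ℝ) (1 - α) ↔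
      z (Fin.last n) ≤
        quantile (↑(List.ofFn (fun i : Fin n => z i.castSucc)) : Multiset ℝ)
          ((1 - α) * (1 + 1 / (n : ℝ))) := by
  have hsplit : (↑(List.ofFn z) : Multiset ℝ)
      = z (Fin.last n) ::ₘ ↑(List.ofFn fun i : Fin n => z i.castSucc) := by
    rw [List.ofFn_succ']
    simp [List.concat_eq_append]
  have hcard : Multiset.card (↑(List.ofFn fun i : Fin n => z i.castSucc) : Multiset ℝ) = n := by
    simp
  rw [hsplit]
  convert le_quantile_cons_self_iff _ (z (Fin.last n)) (1 - α) (by rw [hcard]; omega)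
    (by rwa [hcard])
  simp only [hcard]

/-- Deterministic conformal inclusion lemma: `z_{n+1}` is below the `1-α`
empirical quantile of `z_1,…,z_{n+1}` iff it is below the `(1-α)(1+1/n)`
empirical quantile of `z_1,…,z_n`. -/
theorem conformal_inclusion_lemma (n : ℕ) (hn : 1 ≤ n) (z : Fin (n + 1) → ℝ)
    (α : ℝ) (hα : 0 < α) (hα' : α < 1)
    (hcap : ⌈(1 - α) * ((n : ℝ) + 1)⌉₊ ≤ n) :
    z (Fin.last n) ≤ quantile (↑(List.ofFn z) : Multiset ℝ) (1 - α) ↔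
      z (Fin.last n) ≤
        quantile (↑(List.ofFn (fun i : Fin n => z i.castSucc)) : Multiset ℝ)
          ((1 - α) * (1 + 1 / (n : ℝ))) :=
  conformal_inclusion_lemma_general n hn z α hcap
end
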